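/- arXiv:1811.02612 — 8 statements merged into one kernel-verified Lean document; each statement's English description precedes it below -/
import Mathlib

section
/- Gamma function ratio bound: for any positive integers x and y and any real constant β > 0, log(Γ(x+β)/Γ(y+β)) ≤ x·log x − y·log y − (x − y) + β²/(y+β) + (β+2)·|log((y+β)/(x+β))|, where Γ is the Gamma function. -/
/-!
With `F t = t log t - t`, the step `log Γ(t+1) - log Γ t = log t` is squeezed between the
increments of `F` over `[t-1, t]` and `[t, t+1]`, because `F' = log` is increasing. Summing over
integer steps gives `log Γ a - log Γ b ≤ F a - F b + |log b - log a|` whenever `a - b ∈ ℤ`.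
For `a = x + β`, `b = y + β` the elementary bounds `x log (1 + β/x) ≤ β` and
`y log (1 + β/y) ≥ βy/(y+β)` then compare `F a - F b` with `x log x - y log y - (x - y)`.
-/

open Real

lemma mul_log_sub_log_le {p q : ℝ} (hp : 0 < p) (hq : 0 < q) :
    q * (log p - log q) ≤ p - q := by
  have h := log_le_sub_one_of_pos (div_pos hp hq)
  rw [log_div hp.ne' hq.ne'] at h
  calc q * (log p - log q) ≤ q * (p / q - 1) := by gcongr
    _ = p - q := by field_simp

lemma log_add_one_le_mul_log_sub_mul_log {t : ℝ} (ht : 0 < t) :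
    log t + 1 ≤ (t + 1) * log (t + 1) - t * log t := by
  linear_combination mul_log_sub_log_le ht (by linarith : 0 < t + 1)

lemma mul_log_sub_mul_log_le_log_add_one {t : ℝ} (ht : 0 < t) :
    (t + 1) * log (t + 1) - t * log t ≤ log (t + 1) + 1 := by
  linear_combination mul_log_sub_log_le (by linarith : 0 < t + 1) ht

lemma log_Gamma_add_one {t : ℝ} (ht : 0 < t) : log (Gamma (t + 1)) = log (Gamma t) + log t := by
  rw [Gamma_add_one ht.ne', log_mul ht.ne' (Gamma_pos_of_pos ht).ne', add_comm]

lemma log_Gamma_add_nat_sub_le {t : ℝ} (ht : 0 < t) (n : ℕ) :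
    log (Gamma (t + n)) - log (Gamma t) ≤ (t + n) * log (t + n) - (t + n) - (t * log t - t) := by
  induction n with
  | zero => simp
  | succ n ih =>
    have htn : 0 < t + n := by positivity
    rw [Nat.cast_succ, ← add_assoc, log_Gamma_add_one htn]
    linarith [log_add_one_le_mul_log_sub_mul_log htn]

lemma le_log_Gamma_add_nat_sub {t : ℝ} (ht : 0 < t) (n : ℕ) :
    (t + n) * log (t + n) - (t + n) - (t * log t - t) ≤
      log (Gamma (t + n)) - log (Gamma t) + log (t + n) - log t := by
  induction n with
  | zero => simp
  | succ n ih =>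
    have htn : 0 < t + n := by positivity
    rw [Nat.cast_succ, ← add_assoc, log_Gamma_add_one htn]
    linarith [mul_log_sub_mul_log_le_log_add_one htn]

lemma log_Gamma_sub_log_Gamma_le {a b : ℝ} (ha : 0 < a) (hb : 0 < b) (n : ℤ) (hab : a = b + n) :
    log (Gamma a) - log (Gamma b) ≤
      a * log a - a - (b * log b - b) + |log b - log a| := by
  obtain ⟨k, rfl | rfl⟩ := Int.eq_nat_or_neg n
  · rw [hab, Int.cast_natCast]
    linarith [log_Gamma_add_nat_sub_le hb k, abs_nonneg (log b - log (b + k))]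
  · obtain rfl : b = a + k := by push_cast at hab; linarith
    linarith [le_log_Gamma_add_nat_sub ha k, le_abs_self (log (a + k) - log a)]

lemma add_mul_log_add_sub_add_mul_log_add_le {x y β : ℝ} (hx : 0 < x) (hy : 0 < y)
    (hxβ : 0 < x + β) (hyβ : 0 < y + β) :
    (x + β) * log (x + β) - (y + β) * log (y + β) ≤
      x * log x - y * log y + β ^ 2 / (y + β) + β * (log (x + β) - log (y + β)) := by
  have hx_step : x * (log (x + β) - log x) ≤ β := by
    linarith [mul_log_sub_log_le hxβ hx]
  have hy_step : y * (log y - log (y + β)) ≤ -(β * y / (y + β)) := by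
    calc y * (log y - log (y + β)) = y / (y + β) * ((y + β) * (log y - log (y + β))) := by
          field_simp
      _ ≤ y / (y + β) * (y - (y + β)) := by gcongr; exact mul_log_sub_log_le hy hyβ
      _ = -(β * y / (y + β)) := by ring
  have hβ_sq : β ^ 2 / (y + β) = β - β * y / (y + β) := by field_simp; ring
  linarith

/-- **Gamma function ratio bound** (Lemma on prior bounds): for any positive integers `x` and `y`
and any real constant `β > 0`,
`log (Γ(x+β) / Γ(y+β)) ≤ x log x − y log y − (x − y) + β²/(y+β) + (β+2) |log ((y+β)/(x+β))|`. -/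
theorem gamma_ratio_bound (x y : ℕ) (hx : 0 < x) (hy : 0 < y) (β : ℝ) (hβ : 0 < β) :
    Real.log (Real.Gamma ((x : ℝ) + β) / Real.Gamma ((y : ℝ) + β)) ≤
      (x : ℝ) * Real.log x - (y : ℝ) * Real.log y - ((x : ℝ) - (y : ℝ)) +
        β ^ 2 / ((y : ℝ) + β) + (β + 2) * |Real.log (((y : ℝ) + β) / ((x : ℝ) + β))| := by
  have hx' : (0 : ℝ) < x := by exact_mod_cast hx
  have hy' : (0 : ℝ) < y := by exact_mod_cast hy
  have ha : 0 < (x : ℝ) + β := by positivity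
  have hb : 0 < (y : ℝ) + β := by positivity
  rw [log_div (Gamma_pos_of_pos ha).ne' (Gamma_pos_of_pos hb).ne', log_div hb.ne' ha.ne']
  have hGamma := log_Gamma_sub_log_Gamma_le ha hb ((x : ℤ) - y) (by push_cast; ring)
  have hF := add_mul_log_add_sub_add_mul_log_add_le hx' hy' ha hb
  have hlog : β * (log (x + β) - log (y + β)) ≤ β * |log (y + β) - log (x + β)| := by
    rw [abs_sub_comm]; exact mul_le_mul_of_nonneg_left (le_abs_self _) hβ.le
  linarith [abs_nonneg (log (y + β) - log (x + β))]
end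

section
/- Summation bounds for log-Gamma ratios: let a > 0 be a real number and m a positive integer, and set b = a + m. Then log(Γ(b)/Γ(a)) = Σ_{j=0}^{m−1} log(a+j), and this quantity satisfies both the upper bound Σ_{j=0}^{m−1} log(a+j) ≤ b·log b − a·log a − (b − a) and the lower bound Σ_{j=0}^{m−1} log(a+j) ≥ b·log b − a·log a − (b − a) − (1/a − 1/b + log(b/a)). -/
/-!
The functional equation `Γ(x + 1) = x Γ(x)` gives `Γ(a + m) / Γ(a) = ∏_{j<m} (a + j)`.
For the bounds, `F(x) = x log x - x` (`logPrimitive`) is an antiderivative of the increasing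
function `log`, so `log x ≤ F(x + 1) - F(x) ≤ log (x + 1)`; summing over `x = a + j` telescopes
to `F(b) - F(a)`. The lower bound shifts the sum by one index, which costs `log (b / a)`,
and `1 / a - 1 / b ≥ 0` is extra slack.
-/

open Real Finset

lemma mul_log_sub_log_le_sub {x y : ℝ} (hx : 0 < x) (hy : 0 < y) :
    x * (log y - log x) ≤ y - x :=
  calc x * (log y - log x) = x * log (y / x) := by rw [log_div hy.ne' hx.ne']
    _ ≤ x * (y / x - 1) :=
      mul_le_mul_of_nonneg_left (log_le_sub_one_of_pos (div_pos hy hx)) hx.le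
    _ = y - x := by field_simp

noncomputable def logPrimitive (x : ℝ) : ℝ := x * log x - x

lemma log_le_logPrimitive_add_one_sub {x : ℝ} (hx : 0 < x) :
    log x ≤ logPrimitive (x + 1) - logPrimitive x := by
  have := mul_log_sub_log_le_sub (by positivity : 0 < x + 1) hx
  unfold logPrimitive
  linarith

lemma logPrimitive_add_one_sub_le_log {x : ℝ} (hx : 0 < x) :
    logPrimitive (x + 1) - logPrimitive x ≤ log (x + 1) := by
  have := mul_log_sub_log_le_sub hx (by positivity : 0 < x + 1)
  unfold logPrimitive
  linarith

lemma sum_range_sub_add_nat {G : Type*} [AddCommGroup G] (f : ℝ → G) (a : ℝ) (m : ℕ) :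
    ∑ j ∈ range m, (f (a + j + 1) - f (a + j)) = f (a + m) - f a := by
  simpa [add_assoc] using sum_range_sub (fun j : ℕ => f (a + j)) m

lemma Real.Gamma_add_nat_eq_prod_mul {a : ℝ} (ha : ∀ j : ℕ, a + j ≠ 0) (m : ℕ) :
    Gamma (a + m) = (∏ j ∈ range m, (a + j)) * Gamma a := by
  induction m with
  | zero => simp
  | succ m ih =>
    rw [Nat.cast_succ, ← add_assoc, Gamma_add_one (ha m), ih, prod_range_succ]
    ring

lemma sum_log_add_nat_le {a : ℝ} (ha : 0 < a) (m : ℕ) :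
    ∑ j ∈ range m, log (a + j) ≤ logPrimitive (a + m) - logPrimitive a := by
  rw [← sum_range_sub_add_nat]
  exact sum_le_sum fun j _ => log_le_logPrimitive_add_one_sub (by positivity)

lemma le_sum_log_add_nat {a : ℝ} (ha : 0 < a) (m : ℕ) :
    logPrimitive (a + m) - logPrimitive a - (log (a + m) - log a) ≤
      ∑ j ∈ range m, log (a + j) := by
  have hstep : logPrimitive (a + m) - logPrimitive a ≤ ∑ j ∈ range m, log (a + j + 1) := by
    rw [← sum_range_sub_add_nat]
    exact sum_le_sum fun j _ => logPrimitive_add_one_sub_le_log (by positivity)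
  have hshift := sum_range_sub_add_nat log a m
  rw [sum_sub_distrib] at hshift
  linarith

theorem log_gamma_ratio_sum_bounds_general (a : ℝ) (ha : 0 < a) (m : ℕ)
    (b : ℝ) (hb : b = a + m) :
    Real.log (Real.Gamma b / Real.Gamma a) = ∑ j ∈ Finset.range m, Real.log (a + j) ∧
    (∑ j ∈ Finset.range m, Real.log (a + j)) ≤ b * Real.log b - a * Real.log a - (b - a) ∧
    b * Real.log b - a * Real.log a - (b - a) - (1 / a - 1 / b + Real.log (b / a)) ≤
      ∑ j ∈ Finset.range m, Real.log (a + j) := by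
  subst hb
  have hpos : ∀ j : ℕ, 0 < a + j := fun j => by positivity
  refine ⟨?_, ?_, ?_⟩
  · rw [Gamma_add_nat_eq_prod_mul (fun j => (hpos j).ne'),
      mul_div_cancel_right₀ _ (Gamma_pos_of_pos ha).ne', log_prod fun j _ => (hpos j).ne']
  · have hupper := sum_log_add_nat_le ha m
    unfold logPrimitive at hupper
    linarith
  · have hlower := le_sum_log_add_nat ha m
    have hinv : 1 / (a + m) ≤ 1 / a := one_div_le_one_div_of_le ha (by simp)
    rw [log_div (hpos m).ne' ha.ne']
    unfold logPrimitive at hlower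
    linarith

/-- **Summation bounds for log-Gamma ratios**: for a real `a > 0` and a positive integer `m`,
with `b = a + m`, one has `log (Γ(b)/Γ(a)) = Σ_{j=0}^{m−1} log (a+j)`, and this sum satisfies
`b log b − a log a − (b−a) − (1/a − 1/b + log(b/a)) ≤ Σ_{j<m} log (a+j) ≤ b log b − a log a − (b−a)`. -/
theorem log_gamma_ratio_sum_bounds (a : ℝ) (ha : 0 < a) (m : ℕ) (hm : 0 < m)
    (b : ℝ) (hb : b = a + m) :
    Real.log (Real.Gamma b / Real.Gamma a) = ∑ j ∈ Finset.range m, Real.log (a + j) ∧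
    (∑ j ∈ Finset.range m, Real.log (a + j)) ≤ b * Real.log b - a * Real.log a - (b - a) ∧
    b * Real.log b - a * Real.log a - (b - a) - (1 / a - 1 / b + Real.log (b / a)) ≤
      ∑ j ∈ Finset.range m, Real.log (a + j) :=
  log_gamma_ratio_sum_bounds_general a ha m b hb
end

section
/- Quadratic lower bound for Bernoulli Kullback–Leibler divergence: for any real p ∈ (0,1) and any x, y ∈ (0, p], one has D(x‖y) ≥ (x − y)²/(2p), where D(x‖y) = x·log(x/y) + (1−x)·log((1−x)/(1−y)) is the Kullback–Leibler divergence between Bernoulli(x) and Bernoulli(y). -/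
/-!
As a function of `y`, `D(x‖y) - (x - y)² / (2p)` vanishes at `y = x` and has derivative
`(y - x) (1 / (y (1 - y)) - 1 / p)`. On `(0, p]` we have `y (1 - y) ≤ y ≤ p`, so this derivative
has the sign of `y - x`, and `y = x` is a minimum.
-/

open Real Set

theorem le_of_hasDerivAt_of_sub_mul_deriv_nonneg {f f' : ℝ → ℝ} {s : Set ℝ} (hs : s.OrdConnected)
    {a b : ℝ} (ha : a ∈ s) (hb : b ∈ s) (hf : ∀ t ∈ s, HasDerivAt f (f' t) t)
    (hf' : ∀ t ∈ s, 0 ≤ (t - a) * f' t) : f a ≤ f b := by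
  have hcont : ∀ {u v}, u ∈ s → v ∈ s → ContinuousOn f (Icc u v) := fun hu hv t ht =>
    (hf t (hs.out hu hv ht)).continuousAt.continuousWithinAt
  rcases le_total a b with hab | hba
  · refine monotoneOn_of_hasDerivWithinAt_nonneg (f' := f') (convex_Icc a b) (hcont ha hb)
      (fun t ht => ?_) (fun t ht => ?_) (left_mem_Icc.2 hab) (right_mem_Icc.2 hab) hab
    all_goals
      rw [interior_Icc] at ht
      have hts : t ∈ s := hs.out ha hb (Ioo_subset_Icc_self ht)
    · exact (hf t hts).hasDerivWithinAt
    · exact nonneg_of_mul_nonneg_right (hf' t hts) (sub_pos.2 ht.1)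
  · refine antitoneOn_of_hasDerivWithinAt_nonpos (f' := f') (convex_Icc b a) (hcont hb ha)
      (fun t ht => ?_) (fun t ht => ?_) (left_mem_Icc.2 hba) (right_mem_Icc.2 hba) hba
    all_goals
      rw [interior_Icc] at ht
      have hts : t ∈ s := hs.out hb ha (Ioo_subset_Icc_self ht)
    · exact (hf t hts).hasDerivWithinAt
    · exact nonpos_of_mul_nonneg_right (hf' t hts) (sub_neg.2 ht.2)

noncomputable def bernoulliKL (x y : ℝ) : ℝ :=
  x * log (x / y) + (1 - x) * log ((1 - x) / (1 - y))

theorem bernoulliKL_self (x : ℝ) : bernoulliKL x x = 0 := by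
  simp [bernoulliKL]

theorem hasDerivAt_mul_log_div (a : ℝ) {t : ℝ} (ht : t ≠ 0) :
    HasDerivAt (fun t => a * log (a / t)) (-a / t) t := by
  rcases eq_or_ne a 0 with rfl | ha
  · simpa using hasDerivAt_const t (0 : ℝ)
  · have h :=
      (((hasDerivAt_const t a).div (hasDerivAt_id' t) ht).log (div_ne_zero ha ht)).const_mul a
    refine h.congr_deriv ?_
    simp only [Pi.div_apply]
    field_simp
    ring

theorem hasDerivAt_bernoulliKL_right (x : ℝ) {t : ℝ} (ht₀ : t ≠ 0) (ht₁ : t ≠ 1) :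
    HasDerivAt (bernoulliKL x) ((t - x) / (t * (1 - t))) t := by
  have ht₁' : 1 - t ≠ 0 := sub_ne_zero.2 ht₁.symm
  have h := (hasDerivAt_mul_log_div x ht₀).add
    ((hasDerivAt_mul_log_div (1 - x) ht₁').comp t ((hasDerivAt_id' t).const_sub 1))
  refine h.congr_deriv ?_
  field_simp
  ring

theorem one_div_le_one_div_mul_one_sub {p t : ℝ} (hp : p < 1) (ht : t ∈ Ioc 0 p) :
    1 / p ≤ 1 / (t * (1 - t)) := by
  obtain ⟨ht₀, htp⟩ := ht
  exact one_div_le_one_div_of_le (mul_pos ht₀ (by linarith)) (by nlinarith)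

/-- **Quadratic lower bound for the Bernoulli Kullback–Leibler divergence**: for `p ∈ (0,1)` and
`x, y ∈ (0, p]`, `D(x‖y) = x log(x/y) + (1−x) log((1−x)/(1−y)) ≥ (x−y)²/(2p)`. -/
theorem bernoulli_kl_quadratic_lower_bound (p x y : ℝ)
    (hp : p ∈ Set.Ioo (0 : ℝ) 1) (hx : x ∈ Set.Ioc (0 : ℝ) p) (hy : y ∈ Set.Ioc (0 : ℝ) p) :
    (x - y) ^ 2 / (2 * p) ≤
      x * Real.log (x / y) + (1 - x) * Real.log ((1 - x) / (1 - y)) := by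
  set g : ℝ → ℝ := fun t => bernoulliKL x t - (x - t) ^ 2 / (2 * p)
  have hg : ∀ t ∈ Ioc 0 p, HasDerivAt g ((t - x) * (1 / (t * (1 - t)) - 1 / p)) t := by
    intro t ht
    have h := (hasDerivAt_bernoulliKL_right x ht.1.ne' (by linarith [ht.2, hp.2])).sub
      ((((hasDerivAt_id' t).const_sub x).pow 2).div_const (2 * p))
    refine h.congr_deriv ?_
    field_simp
    ring
  have hsign : ∀ t ∈ Ioc 0 p, 0 ≤ (t - x) * ((t - x) * (1 / (t * (1 - t)) - 1 / p)) := by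
    intro t ht
    rw [← mul_assoc, ← sq]
    exact mul_nonneg (sq_nonneg _) (sub_nonneg.2 (one_div_le_one_div_mul_one_sub hp.2 ht))
  have hmin := le_of_hasDerivAt_of_sub_mul_deriv_nonneg ordConnected_Ioc hx hy hg hsign
  have hgx : g x = 0 := by simp [g, bernoulliKL_self]
  rw [hgx] at hmin
  simpa only [g, bernoulliKL, sub_nonneg] using hmin
end

section
/- Determinant lower bound for the two-community discrepancy matrix: let α > β ≥ 1 be constants, n > 0, and let n₁, n₂, m, x be real numbers satisfying n₁ + n₂ = n, βn/2 ≥ n₁ ≥ n/2 ≥ n₂ ≥ n/(2β), −m/2 ≤ x ≤ m/2, 0 ≤ m ≤ n/(2β), n₁ + 2x ≤ αn/2, and n₂ − 2x ≥ n/(2α). Then the 2×2 matrix R with entries R₁₁ = n₁ − (m/2 − x), R₁₂ = m/2 + x, R₂₁ = m/2 − x, R₂₂ = n₂ − (m/2 + x) satisfies det(R) = n₁n₂ − (m/2)n − x(n₁ − n₂) ≥ n(n − 2m)/(4α). -/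
/-!
Writing `n = n₁ + n₂`, one has the identity
`4α · det R = n (n − 2m) + 2 (α − 1) n (n₂ − m) + (n₁ − n₂) (2α (n₂ − 2x) − n)`,
and both correction terms are products of nonnegative factors: `m ≤ n/(2β) ≤ n₂`, `α ≥ 1`,
`n₁ ≥ n₂`, and `n ≤ 2α (n₂ − 2x)` is the lower size constraint on the second community of `Z`.
-/

/-- Rows are the communities of `Z`, columns the true communities; `m/2 ∓ x` nodes are misplaced
in each direction. -/
noncomputable def discrepancyMatrix (n₁ n₂ m x : ℝ) : Matrix (Fin 2) (Fin 2) ℝ :=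
  !![n₁ - (m / 2 - x), m / 2 + x; m / 2 - x, n₂ - (m / 2 + x)]

theorem det_discrepancyMatrix (n₁ n₂ m x : ℝ) :
    (discrepancyMatrix n₁ n₂ m x).det = n₁ * n₂ - m / 2 * (n₁ + n₂) - x * (n₁ - n₂) := by
  rw [discrepancyMatrix, Matrix.det_fin_two_of]
  ring

theorem le_discrepancy_det {α n₁ n₂ m x : ℝ} (hα : 1 ≤ α) (hn : 0 ≤ n₁ + n₂)
    (hm : m ≤ n₂) (hn₂₁ : n₂ ≤ n₁) (hS : (n₁ + n₂) / (2 * α) ≤ n₂ - 2 * x) :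
    (n₁ + n₂) * (n₁ + n₂ - 2 * m) / (4 * α) ≤
      n₁ * n₂ - m / 2 * (n₁ + n₂) - x * (n₁ - n₂) := by
  have hα₀ : 0 < α := one_pos.trans_le hα
  have hS' : n₁ + n₂ ≤ 2 * α * (n₂ - 2 * x) := (div_le_iff₀' (by positivity)).mp hS
  have h_size : 0 ≤ 2 * (α - 1) * (n₁ + n₂) * (n₂ - m) := by
    have : 0 ≤ α - 1 := by linarith
    have : 0 ≤ n₂ - m := by linarith
    positivity
  have h_balance : 0 ≤ (n₁ - n₂) * (2 * α * (n₂ - 2 * x) - (n₁ + n₂)) :=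
    mul_nonneg (by linarith) (by linarith)
  rw [div_le_iff₀ (by positivity)]
  linear_combination h_size + h_balance

theorem discrepancy_det_lower_bound_general (α β n n₁ n₂ m x : ℝ)
    (hβ : 1 ≤ β) (hαβ : β < α) (hn : 0 < n)
    (hsum : n₁ + n₂ = n)
    (hn2u : n₂ ≤ n / 2) (hn2l : n / (2 * β) ≤ n₂)
    (hm : m ≤ n / (2 * β))
    (hS2 : n / (2 * α) ≤ n₂ - 2 * x) :
    (Matrix.det !![n₁ - (m / 2 - x), m / 2 + x; m / 2 - x, n₂ - (m / 2 + x)] =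
        n₁ * n₂ - m / 2 * n - x * (n₁ - n₂)) ∧
      n * (n - 2 * m) / (4 * α) ≤ n₁ * n₂ - m / 2 * n - x * (n₁ - n₂) := by
  subst hsum
  have hn₂₁ : n₂ ≤ n₁ := by linarith
  exact ⟨det_discrepancyMatrix n₁ n₂ m x,
    le_discrepancy_det (hβ.trans hαβ.le) hn.le (hm.trans hn2l) hn₂₁ hS2⟩

/-- **Determinant lower bound for the two-community discrepancy matrix**: under the stated size
constraints, the 2×2 discrepancy matrix `R` satisfies
`det R = n₁ n₂ − (m/2) n − x (n₁ − n₂) ≥ n (n − 2m) / (4α)`. -/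
theorem discrepancy_det_lower_bound (α β n n₁ n₂ m x : ℝ)
    (hβ : 1 ≤ β) (hαβ : β < α) (hn : 0 < n)
    (hsum : n₁ + n₂ = n)
    (hn1u : n₁ ≤ β * n / 2) (hn1l : n / 2 ≤ n₁)
    (hn2u : n₂ ≤ n / 2) (hn2l : n / (2 * β) ≤ n₂)
    (hx1 : -(m / 2) ≤ x) (hx2 : x ≤ m / 2)
    (hm0 : 0 ≤ m) (hm : m ≤ n / (2 * β))
    (hS1 : n₁ + 2 * x ≤ α * n / 2) (hS2 : n / (2 * α) ≤ n₂ - 2 * x) :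
    (Matrix.det !![n₁ - (m / 2 - x), m / 2 + x; m / 2 - x, n₂ - (m / 2 + x)] =
        n₁ * n₂ - m / 2 * n - x * (n₁ - n₂)) ∧
      n * (n - 2 * m) / (4 * α) ≤ n₁ * n₂ - m / 2 * n - x * (n₁ - n₂) :=
  discrepancy_det_lower_bound_general α β n n₁ n₂ m x hβ hαβ hn hsum hn2u hn2l hm hS2
end

section
/- Bias of the plug-in connectivity estimates: let Z, Z* ∈ [K]^n with discrepancy matrix R(a,b) = #{i : Z_i = a, Z*_i = b}, row sums n'_a = Σ_b R(a,b) ≥ 2, and let B be the K×K matrix with B_{kk} = p and B_{kl} = q for k ≠ l, 0 < q < p < 1. Define B̃_{aa} = ((RBRᵀ)_{aa} − Σ_k B_{kk}R_{ak})/(n'_a(n'_a − 1)) and B̃_{ab} = (RBRᵀ)_{ab}/(n'_a·n'_b) for a ≠ b. Then (p − B̃_{aa})/(p−q) = Σ_{k≠l} R_{ak}R_{al}/(n'_a(n'_a−1)) and (B̃_{ab} − q)/(p−q) = Σ_k R_{ak}R_{bk}/(n'_a·n'_b). Moreover, if every n'_a ≥ n/(Kα) for a constant α ≥ 1 and m =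 n − Σ_a R_{aa}, then max_{a,b} |B̃_{ab} − B_{ab}| ≤ (2Kαm/n)·(p−q). -/
/-!
Writing `B = q J + (p - q) I` gives `(R B Rᵀ)_ab = q n'_a n'_b + (p - q) Σ_k R_ak R_bk`, so
`B̃_ab - q` (for `a ≠ b`) and `p - B̃_aa` are `(p - q)` times the fraction of node pairs from the
estimated blocks whose true labels agree, resp. differ. Such a pair involves a misclassified node,
so the fraction is at most `m_a / n'_a + m_b / n'_b`, resp. `2 m_a / n'_a` (for the latter the
counts must be integers); and `n'_c ≥ n / (Kα)` bounds `Σ_c m_c / n'_c` by `Kα m / n`.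
-/

open Finset

/-- Discrepancy matrix `R(a,b) = #{i : Z i = a, Z* i = b}` (as a real matrix). -/
noncomputable def discMat (n K : ℕ) (Z Zstar : Fin n → Fin K) :
    Matrix (Fin K) (Fin K) ℝ :=
  Matrix.of fun a b => ((Finset.univ.filter fun i => Z i = a ∧ Zstar i = b).card : ℝ)

theorem sum_sum_discMat (n K : ℕ) (Z Zstar : Fin n → Fin K) :
    ∑ a, ∑ b, discMat n K Z Zstar a b = n := by
  have h := card_eq_sum_card_fiberwise (s := univ) (t := univ)
    (f := fun i => (Z i, Zstar i)) fun _ _ => mem_univ _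
  simp only [card_univ, Fintype.card_fin, Fintype.sum_prod_type, Prod.ext_iff] at h
  simp only [discMat, Matrix.of_apply]
  exact_mod_cast h.symm

theorem abs_le_mul_of_div_eq {d c r s : ℝ} (h : d / c = r) (hr : r ∈ Set.Icc 0 s) (hc : 0 < c) :
    |d| ≤ s * c := by
  rw [div_eq_iff hc.ne'] at h
  rw [h, abs_of_nonneg (mul_nonneg hr.1 hc.le)]
  exact mul_le_mul_of_nonneg_right hr.2 hc.le

section

variable {ι : Type*} [Fintype ι]

theorem sum_div_le_mul_sum_div {w N : ι → ℝ} {n C : ℝ} (hw : ∀ c, 0 ≤ w c) (hn : 0 < n)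
    (hC : 0 < C) (hN : ∀ c, n / C ≤ N c) (s : Finset ι) :
    ∑ c ∈ s, w c / N c ≤ C * (∑ c, w c) / n := by
  calc ∑ c ∈ s, w c / N c ≤ ∑ c ∈ s, C * w c / n := sum_le_sum fun c _ => by
        rw [mul_comm, ← div_div_eq_mul_div]
        exact div_le_div_of_nonneg_left (hw c) (by positivity) (hN c)
    _ ≤ ∑ c, C * w c / n := sum_le_sum_of_subset_of_nonneg (subset_univ s) fun c _ _ => by
        have := hw c; positivity
    _ = C * (∑ c, w c) / n := by rw [mul_sum, sum_div]

variable [DecidableEq ι]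

theorem mul_homogeneous_mul_transpose_apply {α : Type*} [CommRing α] {B : Matrix ι ι α} {p q : α}
    (hB : ∀ k l, B k l = if k = l then p else q) (R : Matrix ι ι α) (a b : ι) :
    (R * B * R.transpose) a b =
      q * ((∑ k, R a k) * ∑ k, R b k) + (p - q) * ∑ k, R a k * R b k := by
  have hRB : ∀ l, (R * B) a l = q * ∑ k, R a k + (p - q) * R a l := fun l => by
    have hB' : ∀ k, B k l = q + if k = l then p - q else 0 := fun k => by
      rw [hB]; split_ifs <;> ring
    simp [Matrix.mul_apply, hB', mul_add, sum_add_distrib, mul_sum, mul_comm]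
  simp only [Matrix.mul_apply (M := R * B), hRB, Matrix.transpose_apply, add_mul, sum_add_distrib,
    mul_assoc, ← mul_sum]

theorem sum_sum_ite_ne_mul {α : Type*} [CommRing α] (x : ι → α) :
    ∑ k, ∑ l, (if k ≠ l then x k * x l else 0) = (∑ k, x k) * (∑ k, x k) - ∑ k, x k * x k := by
  have h : ∀ k l, (if k ≠ l then x k * x l else 0) = x k * x l - if k = l then x k * x l else 0 :=
    fun k l => by split_ifs <;> simp_all
  simp [h, sum_mul_sum, sum_sub_distrib]

theorem homogeneous_plugin_diag {α : Type*} [Field α] {B : Matrix ι ι α} {p q : α}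
    (hB : ∀ k l, B k l = if k = l then p else q) (hpq : p ≠ q) {R : Matrix ι ι α} {a : ι} {N : α}
    (hN : N = ∑ k, R a k) (hN0 : N * (N - 1) ≠ 0) :
    (p - ((R * B * R.transpose) a a - ∑ k, B k k * R a k) / (N * (N - 1))) / (p - q) =
      (∑ k, ∑ l, if k ≠ l then R a k * R a l else 0) / (N * (N - 1)) := by
  have hdiag : ∑ k, B k k * R a k = p * N := by simp [hB, hN, mul_sum]
  rw [mul_homogeneous_mul_transpose_apply hB, hdiag, sum_sum_ite_ne_mul, ← hN, sub_div' hN0,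
    div_div, div_eq_div_iff (mul_ne_zero hN0 (sub_ne_zero.2 hpq)) hN0]
  ring

theorem homogeneous_plugin_offDiag {α : Type*} [Field α] {B : Matrix ι ι α} {p q : α}
    (hB : ∀ k l, B k l = if k = l then p else q) (hpq : p ≠ q) {R : Matrix ι ι α} {a b : ι}
    {Na Nb : α} (hNa : Na = ∑ k, R a k) (hNb : Nb = ∑ k, R b k) (hNa0 : Na ≠ 0) (hNb0 : Nb ≠ 0) :
    ((R * B * R.transpose) a b / (Na * Nb) - q) / (p - q) = (∑ k, R a k * R b k) / (Na * Nb) := by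
  have hN : Na * Nb ≠ 0 := mul_ne_zero hNa0 hNb0
  rw [mul_homogeneous_mul_transpose_apply hB, ← hNa, ← hNb, div_sub' hN, div_div,
    div_eq_div_iff (mul_ne_zero hN (sub_ne_zero.2 hpq)) hN]
  ring

theorem sum_sum_ite_ne_mul_le (x : ι → ℝ) (hx : ∀ k, ∃ c : ℕ, x k = c) (a : ι) :
    ∑ k, ∑ l, (if k ≠ l then x k * x l else 0) ≤ 2 * (∑ k, x k - x a) * (∑ k, x k - 1) := by
  choose c hc using hx
  have hsq : ∑ k ∈ univ.erase a, x k ≤ ∑ k ∈ univ.erase a, x k * x k :=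
    sum_le_sum fun k _ => by rw [hc k]; exact_mod_cast Nat.le_mul_self _
  have hsq0 : 0 ≤ ∑ k ∈ univ.erase a, x k * x k := sum_nonneg fun k _ => mul_self_nonneg _
  have hm : ∑ k ∈ univ.erase a, x k = ((∑ k ∈ univ.erase a, c k : ℕ) : ℝ) := by
    push_cast; exact sum_congr rfl fun k _ => hc k
  rw [sum_sum_ite_ne_mul, ← add_sum_erase _ _ (mem_univ a), ← add_sum_erase _ _ (mem_univ a)]
  -- Integrality is essential here: the off-diagonal mass of the row is either `0` or `≥ 1`.
  rcases Nat.eq_zero_or_pos (∑ k ∈ univ.erase a, c k) with h0 | h1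
  · rw [hm, h0]; push_cast; nlinarith
  · have : (1 : ℝ) ≤ ∑ k ∈ univ.erase a, x k := by rw [hm]; exact_mod_cast h1
    nlinarith

theorem sum_sum_ite_ne_mul_div_mem_Icc (x : ι → ℝ) (hx : ∀ k, ∃ c : ℕ, x k = c) (a : ι) {N : ℝ}
    (hN : N = ∑ k, x k) (hN2 : 2 ≤ N) :
    (∑ k, ∑ l, (if k ≠ l then x k * x l else 0)) / (N * (N - 1)) ∈
      Set.Icc 0 (2 * ((N - x a) / N)) := by
  have hx0 : ∀ k, 0 ≤ x k := fun k => by obtain ⟨c, hc⟩ := hx k; simp [hc]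
  refine ⟨div_nonneg (sum_nonneg fun k _ => sum_nonneg fun l _ => ?_) (by nlinarith), ?_⟩
  · split_ifs
    exacts [mul_nonneg (hx0 k) (hx0 l), le_rfl]
  rw [div_le_iff₀ (by nlinarith), mul_div_assoc', div_mul_eq_mul_div, le_div_iff₀ (by linarith)]
  have := hN ▸ sum_sum_ite_ne_mul_le x hx a
  nlinarith

theorem sum_mul_le_of_ne {x y : ι → ℝ} (hx : ∀ k, 0 ≤ x k) (hy : ∀ k, 0 ≤ y k) {a b : ι}
    (hab : a ≠ b) :
    ∑ k, x k * y k ≤ (∑ k, x k) * (∑ k, y k - y b) + (∑ k, x k - x a) * ∑ k, y k := by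
  have hya : y a ≤ ∑ k, y k - y b := by
    rw [← add_sum_erase _ _ (mem_univ b), add_sub_cancel_left]
    exact single_le_sum (fun k _ => hy k) (mem_erase.2 ⟨hab, mem_univ a⟩)
  have hxa : x a ≤ ∑ k, x k := single_le_sum (fun k _ => hx k) (mem_univ a)
  have hrest : ∑ k ∈ univ.erase a, x k * y k ≤ (∑ k, x k - x a) * ∑ k, y k := by
    rw [← sum_erase_eq_sub (mem_univ a), sum_mul]
    exact sum_le_sum fun k _ =>
      mul_le_mul_of_nonneg_left (single_le_sum (fun l _ => hy l) (mem_univ k)) (hx k)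
  have hdiag : x a * y a ≤ (∑ k, x k) * (∑ k, y k - y b) :=
    mul_le_mul hxa hya (hy a) (sum_nonneg fun k _ => hx k)
  linarith [add_sum_erase univ (fun k => x k * y k) (mem_univ a)]

theorem sum_mul_div_mem_Icc_of_ne {x y : ι → ℝ} (hx : ∀ k, 0 ≤ x k) (hy : ∀ k, 0 ≤ y k) {a b : ι}
    (hab : a ≠ b) {X Y : ℝ} (hX : X = ∑ k, x k) (hY : Y = ∑ k, y k) (hX0 : 0 < X) (hY0 : 0 < Y) :
    (∑ k, x k * y k) / (X * Y) ∈ Set.Icc 0 ((X - x a) / X + (Y - y b) / Y) := by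
  refine ⟨div_nonneg (sum_nonneg fun k _ => mul_nonneg (hx k) (hy k)) (by positivity), ?_⟩
  rw [div_add_div _ _ hX0.ne' hY0.ne', div_le_div_iff_of_pos_right (by positivity)]
  linarith [hX ▸ hY ▸ sum_mul_le_of_ne hx hy hab]

end

theorem plugin_connectivity_bias_general (n K : ℕ)
    (Z Zstar : Fin n → Fin K) (p q : ℝ) (hqp : q < p)
    (R : Matrix (Fin K) (Fin K) ℝ) (hR : R = discMat n K Z Zstar)
    (n' : Fin K → ℝ) (hn' : ∀ a, n' a = ∑ b, R a b) (hn2 : ∀ a, 2 ≤ n' a)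
    (B : Matrix (Fin K) (Fin K) ℝ) (hB : ∀ a b, B a b = if a = b then p else q)
    (Btil : Matrix (Fin K) (Fin K) ℝ)
    (hBtil : ∀ a b, Btil a b =
      if a = b then
        ((R * B * R.transpose) a a - ∑ k, B k k * R a k) / (n' a * (n' a - 1))
      else (R * B * R.transpose) a b / (n' a * n' b)) :
    (∀ a, (p - Btil a a) / (p - q) =
        (∑ k, ∑ l, if k ≠ l then R a k * R a l else 0) / (n' a * (n' a - 1))) ∧
    (∀ a b, a ≠ b →
        (Btil a b - q) / (p - q) = (∑ k, R a k * R b k) / (n' a * n' b)) ∧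
    (∀ α : ℝ, 1 ≤ α → (∀ a, (n : ℝ) / (K * α) ≤ n' a) →
      ∀ m : ℝ, m = (n : ℝ) - ∑ a, R a a →
        ∀ a b, |Btil a b - B a b| ≤ 2 * K * α * m / n * (p - q)) := by
  have hpq : 0 < p - q := sub_pos.2 hqp
  have hRnat : ∀ a b, ∃ c : ℕ, R a b = c := fun a b => by subst hR; exact ⟨_, rfl⟩
  have hRnn : ∀ a b, 0 ≤ R a b := fun a b => by obtain ⟨c, hc⟩ := hRnat a b; simp [hc]
  have hn'pos : ∀ a, 0 < n' a := fun a => by linarith [hn2 a]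
  have hdiag : ∀ a, (p - Btil a a) / (p - q) =
      (∑ k, ∑ l, if k ≠ l then R a k * R a l else 0) / (n' a * (n' a - 1)) := fun a => by
    rw [hBtil, if_pos rfl]
    exact homogeneous_plugin_diag hB hqp.ne' (hn' a) (by nlinarith [hn2 a])
  have hoff : ∀ a b, a ≠ b →
      (Btil a b - q) / (p - q) = (∑ k, R a k * R b k) / (n' a * n' b) := fun a b hab => by
    rw [hBtil, if_neg hab]
    exact homogeneous_plugin_offDiag hB hqp.ne' (hn' a) (hn' b) (hn'pos a).ne' (hn'pos b).ne'
  refine ⟨hdiag, hoff, fun α _ hlow m hm a b => ?_⟩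
  have hn : (n : ℝ) = ∑ c, n' c := by simp only [hn', hR, sum_sum_discMat]
  have hrate : ∀ s, ∑ c ∈ s, (n' c - R c c) / n' c ≤ K * α * m / n := fun s => by
    rw [hm, hn, ← sum_sub_distrib]
    refine sum_div_le_mul_sum_div (fun c => ?_) ?_ ?_ (by rwa [← hn]) s
    · rw [hn' c, sub_nonneg]; exact single_le_sum (fun k _ => hRnn c k) (mem_univ c)
    · exact sum_pos (fun c _ => hn'pos c) ⟨a, mem_univ a⟩
    · have : (1 : ℝ) ≤ K := by exact_mod_cast a.pos
      positivity
  have htwice : 2 * K * α * m / n = 2 * (K * α * m / n) := by ring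
  rcases eq_or_ne a b with rfl | hab
  · rw [hB, if_pos rfl, abs_sub_comm, htwice]
    refine abs_le_mul_of_div_eq (hdiag a) ?_ hpq
    have hmem := sum_sum_ite_ne_mul_div_mem_Icc (R a) (hRnat a) a (hn' a) (hn2 a)
    exact ⟨hmem.1, hmem.2.trans (mul_le_mul_of_nonneg_left (by simpa using hrate {a}) zero_le_two)⟩
  · rw [hB, if_neg hab]
    refine abs_le_mul_of_div_eq (hoff a b hab) ?_ hpq
    have hmem :=
      sum_mul_div_mem_Icc_of_ne (hRnn a) (hRnn b) hab (hn' a) (hn' b) (hn'pos a) (hn'pos b)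
    refine ⟨hmem.1, hmem.2.trans ?_⟩
    have hpair := sum_pair (f := fun c => (n' c - R c c) / n' c) hab
    linarith [hrate {a, b}, hrate ∅, sum_empty (f := fun c => (n' c - R c c) / n' c)]

/-- **Bias of the plug-in connectivity estimates**: with discrepancy matrix `R`, row sums
`n'_a ≥ 2`, and `B` the homogeneous connectivity matrix, the plug-in means `B̃` satisfy
`(p − B̃_{aa})/(p−q) = Σ_{k≠l} R_{ak}R_{al}/(n'_a(n'_a−1))`,
`(B̃_{ab} − q)/(p−q) = Σ_k R_{ak}R_{bk}/(n'_a n'_b)` for `a ≠ b`, and if every `n'_a ≥ n/(Kα)`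
with `α ≥ 1` and `m = n − Σ_a R_{aa}`, then `max_{a,b} |B̃_{ab} − B_{ab}| ≤ (2Kαm/n)(p−q)`. -/
theorem plugin_connectivity_bias (n K : ℕ) (hK : 0 < K)
    (Z Zstar : Fin n → Fin K) (p q : ℝ) (hq : 0 < q) (hqp : q < p) (hp : p < 1)
    (R : Matrix (Fin K) (Fin K) ℝ) (hR : R = discMat n K Z Zstar)
    (n' : Fin K → ℝ) (hn' : ∀ a, n' a = ∑ b, R a b) (hn2 : ∀ a, 2 ≤ n' a)
    (B : Matrix (Fin K) (Fin K) ℝ) (hB : ∀ a b, B a b = if a = b then p else q)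
    (Btil : Matrix (Fin K) (Fin K) ℝ)
    (hBtil : ∀ a b, Btil a b =
      if a = b then
        ((R * B * R.transpose) a a - ∑ k, B k k * R a k) / (n' a * (n' a - 1))
      else (R * B * R.transpose) a b / (n' a * n' b)) :
    (∀ a, (p - Btil a a) / (p - q) =
        (∑ k, ∑ l, if k ≠ l then R a k * R a l else 0) / (n' a * (n' a - 1))) ∧
    (∀ a b, a ≠ b →
        (Btil a b - q) / (p - q) = (∑ k, R a k * R b k) / (n' a * n' b)) ∧
    (∀ α : ℝ, 1 ≤ α → (∀ a, (n : ℝ) / (K * α) ≤ n' a) →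
      ∀ m : ℝ, m = (n : ℝ) - ∑ a, R a a →
        ∀ a b, |Btil a b - B a b| ≤ 2 * K * α * m / n * (p - q)) :=
  plugin_connectivity_bias_general n K Z Zstar p q hqp R hR n' hn' hn2 B hB Btil hBtil
end

section
/- Size of the set of improving neighbors: let α > β ≥ 1 be constants, let Z* ∈ [K]^n have all community sizes in [n/(βK), βn/K], let S_α = {Z ∈ [K]^n : all community sizes of Z in [n/(αK), αn/K]}, and let Z ∈ S_α with m = d(Z, Z*) ≥ 1, where d(Z,Z*) = min_{σ∈P_K} H(σ∘Z, Z*) is the number of misclassified nodes. Define B(Z) = {Z' : H(Z, Z') = 1 and d(Z', Z*) = d(Z, Z*) − 1}. Then |S_α ∩ B(Z)| ≥ min{ n/(βK) − n/(αK) − 1, (α−β)n/K − 1, m }. -/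
/-!
Fix a permutation `σ` attaining `d(Z, Z*)`. Relabelling a misclassified node `i` to
`σ⁻¹(Z* i)` gives a neighbour at distance `d - 1`, and distinct nodes give distinct neighbours.
That neighbour stays in `S_α` unless `i` leaves a *light* community (one that cannot lose a node)
or joins a *heavy* one (one that cannot gain a node). With no light and no heavy labels all `m`
misclassified nodes qualify. Otherwise, for every label `a` the misclassified nodes that should
join `a` outnumber those leaving it by `|Z*⁻¹(σ a)| - |Z⁻¹(a)|`, which is at least
`n/(βK) - n/(αK) - 1` for a light `a`; the nodes moving into a light label from a non-light one
therefore number at least that much, and they are good because no label is both light and heavy.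
Heavy labels are symmetric, with `(α - β)n/K - 1`.
-/

open Finset

/-- Hamming distance between label assignments. -/
def hammD (n K : ℕ) (Z Z' : Fin n → Fin K) : ℕ :=
  (Finset.univ.filter fun i => Z i ≠ Z' i).card

/-- Number of misclassified nodes: `d(Z,Z*) = min_{σ ∈ P_K} H(σ∘Z, Z*)`. -/
def dMis (n K : ℕ) (Z Zstar : Fin n → Fin K) : ℕ :=
  Finset.univ.inf' ⟨1, Finset.mem_univ 1⟩
    (fun σ : Equiv.Perm (Fin K) => hammD n K (σ ∘ Z) Zstar)

/-- Community size of `Z` at label `a`. -/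
def commSize (n K : ℕ) (Z : Fin n → Fin K) (a : Fin K) : ℕ :=
  (Finset.univ.filter fun i => Z i = a).card

/-- The feasible set `S_α` of balanced label assignments. -/
noncomputable def Salpha (n K : ℕ) (α : ℝ) : Finset (Fin n → Fin K) :=
  Finset.univ.filter fun Z => ∀ a : Fin K,
    (n : ℝ) / (α * K) ≤ commSize n K Z a ∧ (commSize n K Z a : ℝ) ≤ α * n / K

section update
variable {ι κ : Type*} [DecidableEq ι]

lemma hammingDist_update_self [Fintype ι] [DecidableEq κ] (x : ι → κ) (i : ι) {b : κ}
    (hb : x i ≠ b) :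
    hammingDist x (Function.update x i b) = 1 := by
  rw [hammingDist, card_eq_one]
  refine ⟨i, ?_⟩
  ext j
  rcases eq_or_ne j i with rfl | hj <;> simp [*]

lemma hammingDist_update_add_one [Fintype ι] [DecidableEq κ] (x y : ι → κ) {i : ι}
    (hi : x i ≠ y i) :
    hammingDist (Function.update x i (y i)) y + 1 = hammingDist x y := by
  have : ({j | Function.update x i (y i) j ≠ y j} : Finset ι)
      = ({j | x j ≠ y j} : Finset ι).erase i := by
    ext j
    rcases eq_or_ne j i with rfl | hj <;> simp [*]
  rw [hammingDist, hammingDist, this, card_erase_add_one (by simpa using hi)]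

lemma injOn_update (x c : ι → κ) :
    Set.InjOn (fun i => Function.update x i (c i)) {i | x i ≠ c i} := by
  intro i hi j _ hij
  by_contra hne
  have := congrFun hij i
  simp only [Function.update_self, Function.update_of_ne hne] at this
  exact hi this.symm

lemma sum_card_filter_sub_le_card_filter [DecidableEq κ] (s : Finset ι) (t : Finset κ)
    (f g : ι → κ) :
    ∑ a ∈ t, ((#{i ∈ s | f i = a} : ℤ) - #{i ∈ s | g i = a}) ≤ #{i ∈ s | f i ∈ t ∧ g i ∉ t} := by
  have hsub : {i ∈ s | f i ∈ t} ⊆ {i ∈ s | f i ∈ t ∧ g i ∉ t} ∪ {i ∈ s | g i ∈ t} := by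
    intro i
    simp only [mem_filter, mem_union]
    tauto
  have := (card_le_card hsub).trans (card_union_le _ _)
  rw [sum_sub_distrib]
  simp only [← Nat.cast_sum, sum_card_fiberwise_eq_card_filter]
  omega

lemma le_card_filter_of_forall_le_sub [DecidableEq κ] (s : Finset ι) {t : Finset κ}
    (ht : t.Nonempty) (f g : ι → κ) {c : ℝ} (hc : 0 ≤ c)
    (h : ∀ a ∈ t, c ≤ (#{i ∈ s | f i = a} : ℝ) - #{i ∈ s | g i = a}) :
    c ≤ #{i ∈ s | f i ∈ t ∧ g i ∉ t} := by
  obtain ⟨a, ha⟩ := ht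
  calc c ≤ (#{i ∈ s | f i = a} : ℝ) - #{i ∈ s | g i = a} := h a ha
    _ ≤ ∑ b ∈ t, ((#{i ∈ s | f i = b} : ℝ) - #{i ∈ s | g i = b}) :=
      single_le_sum (fun b hb => hc.trans (h b hb)) ha
    _ ≤ #{i ∈ s | f i ∈ t ∧ g i ∉ t} := by
      exact_mod_cast sum_card_filter_sub_le_card_filter s t f g

end update

section relabel
variable {n K : ℕ}

lemma hammD_eq_hammingDist (Z Z' : Fin n → Fin K) : hammD n K Z Z' = hammingDist Z Z' := rfl

lemma dMis_le_hammD (Z Zstar : Fin n → Fin K) (τ : Equiv.Perm (Fin K)) :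
    dMis n K Z Zstar ≤ hammD n K (τ ∘ Z) Zstar :=
  inf'_le _ (mem_univ τ)

lemma exists_hammD_eq_dMis (Z Zstar : Fin n → Fin K) :
    ∃ σ : Equiv.Perm (Fin K), hammD n K (σ ∘ Z) Zstar = dMis n K Z Zstar := by
  obtain ⟨σ, -, hσ⟩ := exists_mem_eq_inf' univ_nonempty fun σ : Equiv.Perm (Fin K) =>
    hammD n K (σ ∘ Z) Zstar
  exact ⟨σ, hσ.symm⟩

lemma dMis_le_dMis_add_hammD (Z Z' Zstar : Fin n → Fin K) :
    dMis n K Z Zstar ≤ dMis n K Z' Zstar + hammD n K Z Z' := by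
  obtain ⟨τ, hτ⟩ := exists_hammD_eq_dMis Z' Zstar
  calc dMis n K Z Zstar ≤ hammingDist (τ ∘ Z) Zstar := dMis_le_hammD Z Zstar τ
    _ ≤ hammingDist (τ ∘ Z) (τ ∘ Z') + hammingDist (τ ∘ Z') Zstar := hammingDist_triangle _ _ _
    _ = dMis n K Z' Zstar + hammD n K Z Z' := by
      have hcomp : hammingDist (τ ∘ Z) (τ ∘ Z') = hammD n K Z Z' :=
        hammingDist_comp (fun _ => τ) fun _ => τ.injective
      rw [hcomp, ← hammD_eq_hammingDist, hτ, add_comm]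

lemma dMis_update_of_optimal {Z Zstar : Fin n → Fin K} {σ : Equiv.Perm (Fin K)}
    (hσ : hammD n K (σ ∘ Z) Zstar = dMis n K Z Zstar) {i : Fin n} (hi : σ (Z i) ≠ Zstar i) :
    dMis n K (Function.update Z i (σ.symm (Zstar i))) Zstar = dMis n K Z Zstar - 1 := by
  set Z' := Function.update Z i (σ.symm (Zstar i))
  have hdrop : hammD n K (σ ∘ Z') Zstar + 1 = dMis n K Z Zstar := by
    rw [← hσ, hammD_eq_hammingDist, hammD_eq_hammingDist, Function.comp_update,
      Equiv.apply_symm_apply]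
    exact hammingDist_update_add_one _ _ hi
  have hupper := dMis_le_hammD Z' Zstar σ
  have hlower := dMis_le_dMis_add_hammD Z Z' Zstar
  rw [hammD_eq_hammingDist, hammingDist_update_self Z i fun h => hi (by rw [h]; simp)] at hlower
  omega

lemma commSize_update_self_add_one (Z : Fin n → Fin K) (i : Fin n) {b : Fin K} (hb : Z i ≠ b) :
    commSize n K (Function.update Z i b) (Z i) + 1 = commSize n K Z (Z i) := by
  have : ({j | Function.update Z i b j = Z i} : Finset (Fin n))
      = ({j | Z j = Z i} : Finset (Fin n)).erase i := by
    ext j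
    rcases eq_or_ne j i with rfl | hj <;> simp [*, Ne.symm hb]
  rw [commSize, commSize, this, card_erase_add_one (by simp)]

lemma commSize_update_new (Z : Fin n → Fin K) (i : Fin n) {b : Fin K} (hb : Z i ≠ b) :
    commSize n K (Function.update Z i b) b = commSize n K Z b + 1 := by
  have : ({j | Function.update Z i b j = b} : Finset (Fin n))
      = insert i ({j | Z j = b} : Finset (Fin n)) := by
    ext j
    rcases eq_or_ne j i with rfl | hj <;> simp [*]
  rw [commSize, commSize, this, card_insert_of_notMem (by simpa using hb)]

lemma commSize_update_of_ne (Z : Fin n → Fin K) (i : Fin n) (b : Fin K) {a : Fin K}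
    (ha : a ≠ Z i) (hab : a ≠ b) :
    commSize n K (Function.update Z i b) a = commSize n K Z a := by
  unfold commSize
  congr 1
  refine filter_congr fun j _ => ?_
  rcases eq_or_ne j i with rfl | hj <;> simp [*, Ne.symm ha, Ne.symm hab]

lemma update_mem_Salpha {α : ℝ} {Z : Fin n → Fin K} (hZ : Z ∈ Salpha n K α) (i : Fin n)
    {b : Fin K} (hb : Z i ≠ b) (hsrc : (n : ℝ) / (α * K) ≤ commSize n K Z (Z i) - 1)
    (htgt : (commSize n K Z b : ℝ) + 1 ≤ α * n / K) :
    Function.update Z i b ∈ Salpha n K α := by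
  simp only [Salpha, mem_filter, mem_univ, true_and] at hZ ⊢
  intro a
  by_cases ha : a = Z i
  · subst ha
    have hsize : (commSize n K (Function.update Z i b) (Z i) : ℝ) = commSize n K Z (Z i) - 1 := by
      rw [← commSize_update_self_add_one Z i hb]; push_cast; ring
    exact ⟨hsize ▸ hsrc, by linarith [(hZ (Z i)).2]⟩
  by_cases hab : a = b
  · subst hab
    have hsize : (commSize n K (Function.update Z i a) a : ℝ) = commSize n K Z a + 1 := by
      rw [commSize_update_new Z i hb]; push_cast; ring
    exact ⟨by linarith [(hZ a).1], hsize ▸ htgt⟩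
  rw [commSize_update_of_ne Z i b ha hab]
  exact hZ a

end relabel

section flow
variable {n K : ℕ} (σ : Equiv.Perm (Fin K)) (Z Zstar : Fin n → Fin K)

def misclassified : Finset (Fin n) := {j | σ (Z j) ≠ Zstar j}

lemma card_misclassified : #(misclassified σ Z Zstar) = hammD n K (σ ∘ Z) Zstar := rfl

lemma card_misclassified_in_sub_out (a : Fin K) :
    (#{i ∈ misclassified σ Z Zstar | σ.symm (Zstar i) = a} : ℤ)
      - #{i ∈ misclassified σ Z Zstar | Z i = a}
      = commSize n K Zstar (σ a) - commSize n K Z a := by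
  set agree : Finset (Fin n) := {j | Z j = a ∧ Zstar j = σ a}
  have hout : #{i ∈ misclassified σ Z Zstar | Z i = a} + #agree = commSize n K Z a := by
    have hmis : {i ∈ misclassified σ Z Zstar | Z i = a}
        = {j ∈ ({j | Z j = a} : Finset (Fin n)) | Zstar j ≠ σ a} := by
      ext j; simp only [misclassified, mem_filter, mem_univ, true_and]; grind
    have hagree : agree = {j ∈ ({j | Z j = a} : Finset (Fin n)) | ¬Zstar j ≠ σ a} := by
      ext j; simp only [agree, mem_filter, mem_univ, true_and]; grind
    rw [hmis, hagree, card_filter_add_card_filter_not, commSize]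
  have hin : #{i ∈ misclassified σ Z Zstar | σ.symm (Zstar i) = a} + #agree
      = commSize n K Zstar (σ a) := by
    have hmis : {i ∈ misclassified σ Z Zstar | σ.symm (Zstar i) = a}
        = {j ∈ ({j | Zstar j = σ a} : Finset (Fin n)) | Z j ≠ a} := by
      ext j; simp only [misclassified, mem_filter, mem_univ, true_and, Equiv.symm_apply_eq]
      grind [Equiv.apply_eq_iff_eq]
    have hagree : agree = {j ∈ ({j | Zstar j = σ a} : Finset (Fin n)) | ¬Z j ≠ a} := by
      ext j; simp only [agree, mem_filter, mem_univ, true_and]; grind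
    rw [hmis, hagree, card_filter_add_card_filter_not, commSize]
  omega

end flow

lemma div_mul_le_mul_div_of_one_le {β : ℝ} (hβ : 1 ≤ β) (x y : ℝ) (hx : 0 ≤ x) (hy : 0 ≤ y) :
    x / (β * y) ≤ β * x / y := by
  rw [div_mul_eq_div_div_swap, mul_div_assoc]
  have := div_nonneg hx hy
  exact (div_le_self this hβ).trans (le_mul_of_one_le_left this hβ)

section goodFlips
variable {n K : ℕ} {α β : ℝ}

noncomputable def lightLabels (n K : ℕ) (α : ℝ) (Z : Fin n → Fin K) : Finset (Fin K) :=
  {a | (commSize n K Z a : ℝ) - 1 < n / (α * K)}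

noncomputable def heavyLabels (n K : ℕ) (α : ℝ) (Z : Fin n → Fin K) : Finset (Fin K) :=
  {a | α * n / K < (commSize n K Z a : ℝ) + 1}

/-- The set `B(Z)`. -/
def improvingNeighbors (n K : ℕ) (Z Zstar : Fin n → Fin K) : Finset (Fin n → Fin K) :=
  {Z' | hammD n K Z Z' = 1 ∧ dMis n K Z' Zstar = dMis n K Z Zstar - 1}

noncomputable def goodFlips (n K : ℕ) (α : ℝ) (σ : Equiv.Perm (Fin K))
    (Z Zstar : Fin n → Fin K) : Finset (Fin n) :=
  {i ∈ misclassified σ Z Zstar |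
    Z i ∉ lightLabels n K α Z ∧ σ.symm (Zstar i) ∉ heavyLabels n K α Z}

lemma card_goodFlips_le {σ : Equiv.Perm (Fin K)} {Z Zstar : Fin n → Fin K}
    (hZ : Z ∈ Salpha n K α) (hσ : hammD n K (σ ∘ Z) Zstar = dMis n K Z Zstar) :
    #(goodFlips n K α σ Z Zstar) ≤ #(Salpha n K α ∩ improvingNeighbors n K Z Zstar) := by
  have hne : ∀ i ∈ misclassified σ Z Zstar, Z i ≠ σ.symm (Zstar i) := by
    intro i hi h
    simp only [misclassified, mem_filter, mem_univ, true_and] at hi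
    exact hi (by rw [h, Equiv.apply_symm_apply])
  refine card_le_card_of_injOn (fun i => Function.update Z i (σ.symm (Zstar i))) ?_ ?_
  · intro i hi
    simp only [goodFlips, lightLabels, heavyLabels, mem_coe, mem_filter,
      mem_univ, true_and, not_lt] at hi
    obtain ⟨hmis, hsrc, htgt⟩ := hi
    refine mem_inter.2 ⟨update_mem_Salpha hZ i (hne i hmis) hsrc htgt, mem_filter.2 ⟨mem_univ _,
      hammingDist_update_self _ _ (hne i hmis), dMis_update_of_optimal hσ ?_⟩⟩
    simpa [misclassified] using hmis
  · exact (injOn_update Z fun i => σ.symm (Zstar i)).mono fun i hi => hne i (mem_filter.1 hi).1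

variable (σ : Equiv.Perm (Fin K)) (Z Zstar : Fin n → Fin K)

/-- A label both light and heavy would force `αn/K < n/(αK) + 2`, whereas the margins give
`n/(αK) + 2 < n/(βK) + (α - β)n/K ≤ αn/K`. -/
lemma disjoint_lightLabels_heavyLabels (hβ : 1 ≤ β)
    (hA : 0 < (n : ℝ) / (β * K) - n / (α * K) - 1) (hB : 0 < (α - β) * n / K - 1) :
    Disjoint (lightLabels n K α Z) (heavyLabels n K α Z) := by
  have hβK := div_mul_le_mul_div_of_one_le hβ (n : ℝ) K (Nat.cast_nonneg n) (Nat.cast_nonneg K)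
  rw [disjoint_left]
  intro a hl hh
  simp only [lightLabels, heavyLabels, mem_filter, mem_univ, true_and] at hl hh
  have : (α - β) * n / K = α * n / K - β * n / K := by ring
  linarith

lemma le_card_goodFlips_of_light (hβ : 1 ≤ β)
    (hZstar : ∀ a : Fin K, (n : ℝ) / (β * K) ≤ commSize n K Zstar a)
    (hA : 0 < (n : ℝ) / (β * K) - n / (α * K) - 1) (hB : 0 < (α - β) * n / K - 1)
    (hL : (lightLabels n K α Z).Nonempty) :
    (n : ℝ) / (β * K) - n / (α * K) - 1 ≤ #(goodFlips n K α σ Z Zstar) := by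
  set M := misclassified σ Z Zstar
  set L := lightLabels n K α Z
  have hgain : ∀ a ∈ L, (n : ℝ) / (β * K) - n / (α * K) - 1
      ≤ (#{i ∈ M | σ.symm (Zstar i) = a} : ℝ) - #{i ∈ M | Z i = a} := by
    intro a ha
    have hflow : (#{i ∈ M | σ.symm (Zstar i) = a} : ℝ) - #{i ∈ M | Z i = a}
        = commSize n K Zstar (σ a) - commSize n K Z a := by
      exact_mod_cast card_misclassified_in_sub_out σ Z Zstar a
    simp only [L, lightLabels, mem_filter, mem_univ, true_and] at ha
    linarith [hZstar (σ a)]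
  have hsub : {i ∈ M | σ.symm (Zstar i) ∈ L ∧ Z i ∉ L} ⊆ goodFlips n K α σ Z Zstar := by
    intro i hi
    simp only [mem_filter] at hi
    exact mem_filter.2 ⟨hi.1, hi.2.2,
      disjoint_left.1 (disjoint_lightLabels_heavyLabels Z hβ hA hB) hi.2.1⟩
  exact (le_card_filter_of_forall_le_sub M hL _ Z hA.le hgain).trans
    (by exact_mod_cast card_le_card hsub)

lemma le_card_goodFlips_of_heavy (hβ : 1 ≤ β)
    (hZstar : ∀ a : Fin K, (commSize n K Zstar a : ℝ) ≤ β * n / K)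
    (hA : 0 < (n : ℝ) / (β * K) - n / (α * K) - 1) (hB : 0 < (α - β) * n / K - 1)
    (hH : (heavyLabels n K α Z).Nonempty) :
    (α - β) * n / K - 1 ≤ #(goodFlips n K α σ Z Zstar) := by
  set M := misclassified σ Z Zstar
  set H := heavyLabels n K α Z
  have hloss : ∀ b ∈ H, (α - β) * n / K - 1
      ≤ (#{i ∈ M | Z i = b} : ℝ) - #{i ∈ M | σ.symm (Zstar i) = b} := by
    intro b hb
    have hflow : (#{i ∈ M | σ.symm (Zstar i) = b} : ℝ) - #{i ∈ M | Z i = b}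
        = commSize n K Zstar (σ b) - commSize n K Z b := by
      exact_mod_cast card_misclassified_in_sub_out σ Z Zstar b
    simp only [H, heavyLabels, mem_filter, mem_univ, true_and] at hb
    have : (α - β) * n / K = α * n / K - β * n / K := by ring
    linarith [hZstar (σ b)]
  have hsub : {i ∈ M | Z i ∈ H ∧ σ.symm (Zstar i) ∉ H} ⊆ goodFlips n K α σ Z Zstar := by
    intro i hi
    simp only [mem_filter] at hi
    exact mem_filter.2 ⟨hi.1,
      disjoint_right.1 (disjoint_lightLabels_heavyLabels Z hβ hA hB) hi.2.1, hi.2.2⟩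
  exact (le_card_filter_of_forall_le_sub M hH Z _ hB.le hloss).trans
    (by exact_mod_cast card_le_card hsub)

lemma min_le_card_goodFlips (hβ : 1 ≤ β)
    (hZstar : ∀ a : Fin K,
      (n : ℝ) / (β * K) ≤ commSize n K Zstar a ∧ (commSize n K Zstar a : ℝ) ≤ β * n / K) :
    min (min ((n : ℝ) / (β * K) - n / (α * K) - 1) ((α - β) * n / K - 1))
        (#(misclassified σ Z Zstar) : ℝ) ≤ #(goodFlips n K α σ Z Zstar) := by
  rcases le_or_gt ((n : ℝ) / (β * K) - n / (α * K) - 1) 0 with hA | hA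
  · exact (min_le_left _ _).trans ((min_le_left _ _).trans (hA.trans (Nat.cast_nonneg _)))
  rcases le_or_gt ((α - β) * n / K - 1) 0 with hB | hB
  · exact (min_le_left _ _).trans ((min_le_right _ _).trans (hB.trans (Nat.cast_nonneg _)))
  rcases (lightLabels n K α Z).eq_empty_or_nonempty with hL | hL
  · rcases (heavyLabels n K α Z).eq_empty_or_nonempty with hH | hH
    · refine (min_le_right _ _).trans_eq ?_
      simp [goodFlips, hL, hH]
    · exact (min_le_left _ _).trans ((min_le_right _ _).trans
        (le_card_goodFlips_of_heavy σ Z Zstar hβ (fun a => (hZstar a).2) hA hB hH))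
  · exact (min_le_left _ _).trans ((min_le_left _ _).trans
      (le_card_goodFlips_of_light σ Z Zstar hβ (fun a => (hZstar a).1) hA hB hL))

end goodFlips

theorem improving_neighbors_card_general (n K : ℕ) (α β : ℝ)
    (hβ : 1 ≤ β)
    (Zstar : Fin n → Fin K)
    (hZstar : ∀ a : Fin K,
      (n : ℝ) / (β * K) ≤ commSize n K Zstar a ∧ (commSize n K Zstar a : ℝ) ≤ β * n / K)
    (Z : Fin n → Fin K) (hZ : Z ∈ Salpha n K α) :
    min (min ((n : ℝ) / (β * K) - (n : ℝ) / (α * K) - 1) ((α - β) * n / K - 1))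
        (dMis n K Z Zstar : ℝ) ≤
      ((Salpha n K α ∩
        Finset.univ.filter fun Z' : Fin n → Fin K =>
          hammD n K Z Z' = 1 ∧ dMis n K Z' Zstar = dMis n K Z Zstar - 1).card : ℝ) := by
  obtain ⟨σ, hσ⟩ := exists_hammD_eq_dMis Z Zstar
  have hbound := min_le_card_goodFlips (α := α) σ Z Zstar hβ hZstar
  rw [card_misclassified, hσ] at hbound
  exact hbound.trans (by exact_mod_cast card_goodFlips_le hZ hσ)

/-- **Size of the set of improving neighbors**: for `Z ∈ S_α` with `m = d(Z,Z*) ≥ 1`, the set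
`B(Z)` of single-flip neighbors which decrease the number of misclassified nodes satisfies
`|S_α ∩ B(Z)| ≥ min{ n/(βK) − n/(αK) − 1, (α−β)n/K − 1, m }`. -/
theorem improving_neighbors_card (n K : ℕ) (hK : 0 < K) (α β : ℝ)
    (hβ : 1 ≤ β) (hαβ : β < α)
    (Zstar : Fin n → Fin K)
    (hZstar : ∀ a : Fin K,
      (n : ℝ) / (β * K) ≤ commSize n K Zstar a ∧ (commSize n K Zstar a : ℝ) ≤ β * n / K)
    (Z : Fin n → Fin K) (hZ : Z ∈ Salpha n K α) (hm : 1 ≤ dMis n K Z Zstar) :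
    min (min ((n : ℝ) / (β * K) - (n : ℝ) / (α * K) - 1) ((α - β) * n / K - 1))
        (dMis n K Z Zstar : ℝ) ≤
      ((Salpha n K α ∩
        Finset.univ.filter fun Z' : Fin n → Fin K =>
          hammD n K Z Z' = 1 ∧ dMis n K Z' Zstar = dMis n K Z Zstar - 1).card : ℝ) :=
  improving_neighbors_card_general n K α β hβ Zstar hZstar Z hZ
end

section
/- Counting bounds for disagreement pairs: let Z, Z* ∈ [K]^n with m = H(Z, Z*) = #{i : Z_i ≠ Z*_i}, suppose every community size of Z is at most αn/K and every community size of Z* is at most βn/K, for constants α, β ≥ 1. Define N_d = #{(i,j) : i < j, Z_i = Z_j, Z*_i ≠ Z*_j} and N_s = #{(i,j) : i < j, Z*_i = Z*_j, Z_i ≠ Z_j}. Then N_d ≤ αmn/K and N_s ≤ βmn/K. -/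
open Finset

/-!
A pair `i < j` with `Z i = Z j` but `Z* i ≠ Z* j` has an endpoint `d` where `Z` and `Z*`
disagree, since otherwise `Z* i = Z i = Z j = Z* j`. Charging the pair to such an endpoint,
its other endpoint lies in the `Z`-community of `d`, and no pair is charged twice to the same
ordered pair. Hence `N_d` is at most the sum of the `Z`-community sizes over the `m` mismatched
vertices, that is at most `m · αn/K`; `N_s` is the same bound with `Z` and `Z*` exchanged.
-/

section SplitPairs

variable {α β : Type*} [Fintype α] [LinearOrder α] [DecidableEq β]

/-- `N_d = #(splitPairs Z Z*)` and `N_s = #(splitPairs Z* Z)`. -/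
def splitPairs (Z W : α → β) : Finset (α × α) :=
  {e | e.1 < e.2 ∧ Z e.1 = Z e.2 ∧ W e.1 ≠ W e.2}

theorem card_splitPairs_le_sum (Z W : α → β) :
    #(splitPairs Z W) ≤ ∑ d with Z d ≠ W d, #{k | Z k = Z d} := by
  rw [← card_sigma]
  refine card_le_card_of_injOn
    (fun e => if Z e.1 ≠ W e.1 then ⟨e.1, e.2⟩ else ⟨e.2, e.1⟩) ?_ ?_
  · intro e he
    simp only [splitPairs, coe_filter, mem_univ, true_and, Set.mem_ofPred_eq] at he
    obtain ⟨-, hZ, hW⟩ := he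
    dsimp only
    by_cases h : Z e.1 ≠ W e.1
    · rw [if_pos h]
      simp [h, ← hZ]
    · have h₂ : Z e.2 ≠ W e.2 := fun h₂ => hW (by grind)
      rw [if_neg h]
      simp [h₂, hZ]
  · intro a ha b hb hab
    simp only [splitPairs, coe_filter, mem_univ, true_and, Set.mem_ofPred_eq] at ha hb
    dsimp only at hab
    split_ifs at hab <;> simp only [Sigma.mk.inj_iff, heq_eq_eq] at hab <;> grind

end SplitPairs

theorem hammD_comm (n K : ℕ) (Z W : Fin n → Fin K) : hammD n K Z W = hammD n K W Z := by
  simp only [hammD, ne_comm]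

theorem card_splitPairs_le {n K : ℕ} (Z W : Fin n → Fin K) {c : ℝ}
    (hc : ∀ a, (commSize n K Z a : ℝ) ≤ c) :
    (#(splitPairs Z W) : ℝ) ≤ hammD n K Z W * c :=
  calc (#(splitPairs Z W) : ℝ) ≤ ∑ d with Z d ≠ W d, (commSize n K Z (Z d) : ℝ) := by
        exact_mod_cast card_splitPairs_le_sum Z W
    _ ≤ ∑ _d with Z _d ≠ W _d, c := sum_le_sum fun d _ => hc (Z d)
    _ = hammD n K Z W * c := by simp [hammD]

theorem disagreement_pair_bounds_general (n K : ℕ) (α β : ℝ)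
    (Z Zstar : Fin n → Fin K)
    (hZ : ∀ a : Fin K, (commSize n K Z a : ℝ) ≤ α * n / K)
    (hZstar : ∀ a : Fin K, (commSize n K Zstar a : ℝ) ≤ β * n / K)
    (m : ℕ) (hm : m = hammD n K Z Zstar) :
    (((Finset.univ.filter fun e : Fin n × Fin n =>
          e.1 < e.2 ∧ Z e.1 = Z e.2 ∧ Zstar e.1 ≠ Zstar e.2).card : ℝ) ≤
        α * m * n / K) ∧
    (((Finset.univ.filter fun e : Fin n × Fin n =>
          e.1 < e.2 ∧ Zstar e.1 = Zstar e.2 ∧ Z e.1 ≠ Z e.2).card : ℝ) ≤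
        β * m * n / K) := by
  subst hm
  constructor
  · exact (card_splitPairs_le Z Zstar hZ).trans_eq (by ring)
  · rw [hammD_comm]
    exact (card_splitPairs_le Zstar Z hZstar).trans_eq (by ring)

/-- **Counting bounds for disagreement pairs**: with `m = H(Z,Z*)`, community sizes of `Z`
at most `αn/K` and of `Z*` at most `βn/K`, the counts
`N_d = #{(i,j) : i<j, Z_i=Z_j, Z*_i≠Z*_j}` and `N_s = #{(i,j) : i<j, Z*_i=Z*_j, Z_i≠Z_j}`
satisfy `N_d ≤ αmn/K` and `N_s ≤ βmn/K`. -/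
theorem disagreement_pair_bounds (n K : ℕ) (hK : 0 < K) (α β : ℝ)
    (hα : 1 ≤ α) (hβ : 1 ≤ β)
    (Z Zstar : Fin n → Fin K)
    (hZ : ∀ a : Fin K, (commSize n K Z a : ℝ) ≤ α * n / K)
    (hZstar : ∀ a : Fin K, (commSize n K Zstar a : ℝ) ≤ β * n / K)
    (m : ℕ) (hm : m = hammD n K Z Zstar) :
    (((Finset.univ.filter fun e : Fin n × Fin n =>
          e.1 < e.2 ∧ Z e.1 = Z e.2 ∧ Zstar e.1 ≠ Zstar e.2).card : ℝ) ≤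
        α * m * n / K) ∧
    (((Finset.univ.filter fun e : Fin n × Fin n =>
          e.1 < e.2 ∧ Zstar e.1 = Zstar e.2 ∧ Z e.1 ≠ Z e.2).card : ℝ) ≤
        β * m * n / K) :=
  disagreement_pair_bounds_general n K α β Z Zstar hZ hZstar m hm
end

section
/- Exact Chernoff-type identity for Bernoulli variables: let 0 < q < p < 1, t* = (1/2)·log(p(1−q)/(q(1−p))), λ* = log((1−q)/(1−p)) / log(p(1−q)/(q(1−p))), and I = −2·log(√(pq) + √((1−p)(1−q))). If x ~ Bernoulli(q) then E[exp(t*(x − λ*))] = exp(−I/2), and if y ~ Bernoulli(p) then E[exp(−t*(y − λ*))] = exp(−I/2). Consequently, for independent random variables x₁,…,x_{n₁} i.i.d. Bernoulli(q) and y₁,…,y_{n₂} i.i.d. Bernoulli(p), E[exp(t*(Σ_{i=1}^{n₁}(x_i − λ*) − Σ_{j=1}^{n₂}(y_j − λ*)))] = exp(−(n₁+n₂)·I/2). -/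
/-!
At `x = 1` the exponent `t* (x - λ*)` equals `½ log (p / q)` and at `x = 0` it equals
`½ log ((1 - p) / (1 - q))`, so the two terms of the Bernoulli(q) expectation are
`q √(p/q) = √(pq)` and `(1 - q) √((1-p)/(1-q)) = √((1-p)(1-q))`; the Bernoulli(p) case is the
mirror image. For the sum, independence factorises the moment generating function into
`n₁ + n₂` copies of `exp (-I/2)`.
-/

open MeasureTheory ProbabilityTheory

lemma integral_comp_of_mem_zero_one {Ω : Type*} [MeasurableSpace Ω] (μ : Measure Ω)
    [IsProbabilityMeasure μ] {W : Ω → ℝ} (hW : Measurable W) (hval : ∀ ω, W ω = 0 ∨ W ω = 1)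
    (g : ℝ → ℝ) :
    ∫ ω, g (W ω) ∂μ = μ.real {ω | W ω = 1} * g 1 + (1 - μ.real {ω | W ω = 1}) * g 0 := by
  have hS : MeasurableSet {ω | W ω = 1} := hW (measurableSet_singleton 1)
  have haffine : (fun ω => g (W ω)) =
      fun ω => g 0 + (g 1 - g 0) * {ω | W ω = 1}.indicator 1 ω := by
    funext ω
    rcases hval ω with h | h <;> simp [h]
  rw [haffine, integral_add (integrable_const _) (((integrable_const 1).indicator hS).const_mul _),
    integral_const, integral_const_mul, integral_indicator_one hS, probReal_univ, one_smul]
  ring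

lemma mul_exp_half_log_sub_log {a b : ℝ} (ha : 0 < a) (hb : 0 < b) :
    a * Real.exp ((Real.log b - Real.log a) / 2) = Real.sqrt (a * b) := by
  rw [Real.sqrt_eq_rpow, Real.rpow_def_of_pos (mul_pos ha hb), Real.log_mul ha.ne' hb.ne']
  nth_rw 1 [← Real.exp_log ha]
  rw [← Real.exp_add]
  congr 1
  ring

section ChernoffParameters

variable {p q t lam : ℝ}

lemma chernoff_exponents (hq : 0 < q) (hqp : q < p) (hp : p < 1)
    (ht : t = Real.log (p * (1 - q) / (q * (1 - p))) / 2)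
    (hlam : lam = Real.log ((1 - q) / (1 - p)) / Real.log (p * (1 - q) / (q * (1 - p)))) :
    t * (1 - lam) = (Real.log p - Real.log q) / 2 ∧
      t * lam = (Real.log (1 - q) - Real.log (1 - p)) / 2 := by
  have hp0 : 0 < p := hq.trans hqp
  have h1p : 0 < 1 - p := by linarith
  have h1q : 0 < 1 - q := by linarith
  have hratio : 1 < p * (1 - q) / (q * (1 - p)) := by
    rw [one_lt_div (by positivity)]
    nlinarith
  have hlog : Real.log (p * (1 - q) / (q * (1 - p))) =
      Real.log p + Real.log (1 - q) - Real.log q - Real.log (1 - p) := by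
    rw [Real.log_div (by positivity) (by positivity), Real.log_mul hp0.ne' h1q.ne',
      Real.log_mul hq.ne' h1p.ne']
    ring
  have htlam : t * lam = (Real.log (1 - q) - Real.log (1 - p)) / 2 := by
    rw [ht, hlam, Real.log_div h1q.ne' h1p.ne']
    field_simp [(Real.log_pos hratio).ne']
  refine ⟨?_, htlam⟩
  rw [mul_one_sub, htlam, ht, hlog]
  ring

lemma chernoff_bernoulli_q (hq : 0 < q) (hqp : q < p) (hp : p < 1)
    (ht : t = Real.log (p * (1 - q) / (q * (1 - p))) / 2)
    (hlam : lam = Real.log ((1 - q) / (1 - p)) / Real.log (p * (1 - q) / (q * (1 - p)))) :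
    q * Real.exp (t * (1 - lam)) + (1 - q) * Real.exp (t * (0 - lam)) =
      Real.sqrt (p * q) + Real.sqrt ((1 - p) * (1 - q)) := by
  obtain ⟨h1, h0⟩ := chernoff_exponents hq hqp hp ht hlam
  have h0' : t * (0 - lam) = (Real.log (1 - p) - Real.log (1 - q)) / 2 := by linarith
  rw [h1, h0', mul_exp_half_log_sub_log hq (hq.trans hqp),
    mul_exp_half_log_sub_log (by linarith) (by linarith), mul_comm q, mul_comm (1 - q)]

lemma chernoff_bernoulli_p (hq : 0 < q) (hqp : q < p) (hp : p < 1)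
    (ht : t = Real.log (p * (1 - q) / (q * (1 - p))) / 2)
    (hlam : lam = Real.log ((1 - q) / (1 - p)) / Real.log (p * (1 - q) / (q * (1 - p)))) :
    p * Real.exp (-t * (1 - lam)) + (1 - p) * Real.exp (-t * (0 - lam)) =
      Real.sqrt (p * q) + Real.sqrt ((1 - p) * (1 - q)) := by
  obtain ⟨h1, h0⟩ := chernoff_exponents hq hqp hp ht hlam
  have h1' : -t * (1 - lam) = (Real.log q - Real.log p) / 2 := by linarith
  have h0' : -t * (0 - lam) = (Real.log (1 - q) - Real.log (1 - p)) / 2 := by linarith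
  rw [h1', h0', mul_exp_half_log_sub_log (hq.trans hqp) hq,
    mul_exp_half_log_sub_log (by linarith) (by linarith)]

end ChernoffParameters

lemma ProbabilityTheory.iIndepFun.integral_exp_mul_sum_sub_sum {Ω ι κ : Type*} [MeasurableSpace Ω]
    {μ : Measure Ω} [Fintype ι] [Fintype κ] {X : ι ⊕ κ → Ω → ℝ}
    (hmeas : ∀ k, Measurable (X k)) (hindep : iIndepFun X μ) (t c : ℝ) :
    ∫ ω, Real.exp (t * (∑ i, (X (.inl i) ω - c) - ∑ j, (X (.inr j) ω - c))) ∂μ =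
      (∏ i, ∫ ω, Real.exp (t * (X (.inl i) ω - c)) ∂μ) *
        ∏ j, ∫ ω, Real.exp (-t * (X (.inr j) ω - c)) ∂μ := by
  let φ : ι ⊕ κ → ℝ → ℝ := Sum.elim (fun _ x => x - c) (fun _ x => c - x)
  have hφ : ∀ k, Measurable (φ k) := by
    rintro (i | j)
    · exact measurable_id.sub_const c
    · exact measurable_const.sub measurable_id
  have hmgf := (hindep.comp φ hφ).mgf_sum (t := t) (fun k => (hφ k).comp (hmeas k)) Finset.univ
  simp only [mgf, Fintype.prod_sum_type, Finset.sum_apply, Fintype.sum_sum_type,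
    Function.comp_apply] at hmgf
  have hsum : ∀ ω, ∑ i, (X (.inl i) ω - c) - ∑ j, (X (.inr j) ω - c) =
      ∑ i, φ (.inl i) (X (.inl i) ω) + ∑ j, φ (.inr j) (X (.inr j) ω) := by
    intro ω
    simp only [φ, Sum.elim_inl, Sum.elim_inr, Finset.sum_sub_distrib]
    ring
  have hneg : ∀ j ω, -t * (X (.inr j) ω - c) = t * φ (.inr j) (X (.inr j) ω) := by
    intro j ω
    simp only [φ, Sum.elim_inr]
    ring
  simp_rw [hsum, hneg]
  exact hmgf

/-- **Exact Chernoff-type identity for Bernoulli variables**: with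
`t* = (1/2) log(p(1−q)/(q(1−p)))`, `λ* = log((1−q)/(1−p))/log(p(1−q)/(q(1−p)))` and
`I = −2 log(√(pq) + √((1−p)(1−q)))`: if `x ~ Bernoulli(q)` then `E[exp(t*(x−λ*))] = exp(−I/2)`;
if `y ~ Bernoulli(p)` then `E[exp(−t*(y−λ*))] = exp(−I/2)`; and for an independent family of
`n₁` Bernoulli(q) variables and `n₂` Bernoulli(p) variables,
`E[exp(t*(Σᵢ(xᵢ−λ*) − Σⱼ(yⱼ−λ*)))] = exp(−(n₁+n₂) I/2)`. -/
theorem bernoulli_chernoff_identity (p q : ℝ) (hq : 0 < q) (hqp : q < p) (hp : p < 1)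
    (tstar lamstar I : ℝ)
    (ht : tstar = Real.log (p * (1 - q) / (q * (1 - p))) / 2)
    (hlam : lamstar =
      Real.log ((1 - q) / (1 - p)) / Real.log (p * (1 - q) / (q * (1 - p))))
    (hI : I = -2 * Real.log (Real.sqrt (p * q) + Real.sqrt ((1 - p) * (1 - q))))
    {Ω : Type*} [MeasurableSpace Ω] (μ : Measure Ω) [IsProbabilityMeasure μ]
    (n₁ n₂ : ℕ) (X : Fin n₁ ⊕ Fin n₂ → Ω → ℝ)
    (hmeas : ∀ i, Measurable (X i))
    (hindep : iIndepFun X μ)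
    (hval : ∀ i ω, X i ω = 0 ∨ X i ω = 1)
    (hxdist : ∀ i : Fin n₁, μ {ω | X (Sum.inl i) ω = 1} = ENNReal.ofReal q)
    (hydist : ∀ j : Fin n₂, μ {ω | X (Sum.inr j) ω = 1} = ENNReal.ofReal p) :
    (∀ i : Fin n₁,
      ∫ ω, Real.exp (tstar * (X (Sum.inl i) ω - lamstar)) ∂μ = Real.exp (-I / 2)) ∧
    (∀ j : Fin n₂,
      ∫ ω, Real.exp (-tstar * (X (Sum.inr j) ω - lamstar)) ∂μ = Real.exp (-I / 2)) ∧
    ∫ ω, Real.exp (tstar * (∑ i : Fin n₁, (X (Sum.inl i) ω - lamstar) -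
        ∑ j : Fin n₂, (X (Sum.inr j) ω - lamstar))) ∂μ =
      Real.exp (-((n₁ : ℝ) + n₂) * I / 2) := by
  have hS : Real.exp (-I / 2) = Real.sqrt (p * q) + Real.sqrt ((1 - p) * (1 - q)) := by
    have hpos : 0 < Real.sqrt (p * q) + Real.sqrt ((1 - p) * (1 - q)) :=
      add_pos_of_pos_of_nonneg (Real.sqrt_pos.2 (mul_pos (hq.trans hqp) hq)) (Real.sqrt_nonneg _)
    rw [show -I / 2 = Real.log (Real.sqrt (p * q) + Real.sqrt ((1 - p) * (1 - q))) by
      rw [hI]; ring, Real.exp_log hpos]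
  have hx : ∀ i : Fin n₁,
      ∫ ω, Real.exp (tstar * (X (Sum.inl i) ω - lamstar)) ∂μ = Real.exp (-I / 2) := by
    intro i
    rw [integral_comp_of_mem_zero_one μ (hmeas _) (hval _)
        (fun x => Real.exp (tstar * (x - lamstar))),
      measureReal_def, hxdist i, ENNReal.toReal_ofReal hq.le, hS]
    exact chernoff_bernoulli_q hq hqp hp ht hlam
  have hy : ∀ j : Fin n₂,
      ∫ ω, Real.exp (-tstar * (X (Sum.inr j) ω - lamstar)) ∂μ = Real.exp (-I / 2) := by
    intro j
    rw [integral_comp_of_mem_zero_one μ (hmeas _) (hval _)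
        (fun x => Real.exp (-tstar * (x - lamstar))),
      measureReal_def, hydist j, ENNReal.toReal_ofReal (hq.trans hqp).le, hS]
    exact chernoff_bernoulli_p hq hqp hp ht hlam
  refine ⟨hx, hy, ?_⟩
  rw [hindep.integral_exp_mul_sum_sub_sum hmeas, Finset.prod_congr rfl fun i _ => hx i,
    Finset.prod_congr rfl fun j _ => hy j, Finset.prod_const, Finset.prod_const, ← pow_add,
    Finset.card_univ, Finset.card_univ, Fintype.card_fin, Fintype.card_fin, ← Real.exp_nat_mul]
  congr 1
  push_cast
  ring
end
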